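/- arXiv:1709.10312 — 3 statements merged into one kernel-verified Lean document; each statement's English description precedes it below -/
import Mathlib

section
/- Let (V_k)_{k≥0} be a nonnegative stochastic process adapted to a filtration, and suppose there exist constants 0 < κ̂ < 1 and ψ̂ ≥ 0 such that E[V_{k+1} | F_k] - V_k ≤ -κ̂ V_k + ψ̂ almost surely for all k. Then for any ε > 0 with ε ≥ ψ̂/κ̂ and any time horizon T ∈ ℕ, P( max_{0 ≤ k ≤ T} V_k ≥ ε ) ≤ 1 - (1 - V_0/ε)(1 - ψ̂/ε)^T (when V_0 ≤ ε). -/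
/-!
Let `A k` be the event that `V` stays below `ε` up to time `k` and `c = 1 - ψ/ε`. Since
`ψ/ε ≤ κ` and `V ≥ 0`, the drift condition gives `E[ε - V (k+1) | ℱ k] ≥ c (ε - V k)`, and
leaving `A k` at time `k+1` only removes mass where `ε - V (k+1) ≤ 0`. Hence
`∫_{A k} (ε - V k) dμ` is at least `(ε - v₀) cᵏ`, while it is at most `ε μ(A k)` because `V ≥ 0`.
The bound follows by passing to the complement of `A T`.
-/

open MeasureTheory Filter

theorem setIntegral_le_setIntegral_inter {Ω : Type*} {m : MeasurableSpace Ω} {μ : Measure Ω}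
    {f : Ω → ℝ} {s t : Set Ω} (hs : MeasurableSet s) (ht : MeasurableSet t)
    (hf : IntegrableOn f s μ) (hnonpos : ∀ x ∈ s \ t, f x ≤ 0) :
    ∫ x in s, f x ∂μ ≤ ∫ x in s ∩ t, f x ∂μ := by
  rw [← integral_inter_add_sdiff ht hf]
  linarith [setIntegral_nonpos (μ := μ) (hs.diff ht) hnonpos]

theorem setIntegral_le_of_condExp_le {Ω : Type*} {m m₀ : MeasurableSpace Ω} {μ : Measure Ω}
    [IsFiniteMeasure μ] (hm : m ≤ m₀) {f g : Ω → ℝ} (hf : Integrable f μ) (hg : Integrable g μ)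
    (hfg : μ[f | m] ≤ᵐ[μ] g) {s : Set Ω} (hs : MeasurableSet[m] s) :
    ∫ x in s, f x ∂μ ≤ ∫ x in s, g x ∂μ := by
  rw [← setIntegral_condExp hm hf hs]
  exact setIntegral_mono_ae integrable_condExp.integrableOn hg.integrableOn hfg

theorem one_sub_div_mul_sub_le {κ ψ ε v : ℝ} (hε : 0 < ε) (hψε : ψ / ε ≤ κ) (hv : 0 ≤ v) :
    (1 - ψ / ε) * (ε - v) ≤ ε - (v - κ * v + ψ) := by
  have hψ : ψ / ε * ε = ψ := div_mul_cancel₀ ψ hε.ne'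
  nlinarith [mul_nonneg (sub_nonneg.2 hψε) hv]

section StaysBelow

variable {Ω : Type*} {m : MeasurableSpace Ω}

def staysBelow (V : ℕ → Ω → ℝ) (ε : ℝ) (k : ℕ) : Set Ω := {ω | ∀ j ≤ k, V j ω < ε}

variable {V : ℕ → Ω → ℝ} {ε : ℝ}

theorem staysBelow_zero : staysBelow V ε 0 = Set.univ ∩ {ω | V 0 ω < ε} := by
  ext ω
  simp [staysBelow]

theorem staysBelow_succ (k : ℕ) :
    staysBelow V ε (k + 1) = staysBelow V ε k ∩ {ω | V (k + 1) ω < ε} := by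
  ext ω
  simp only [staysBelow, Set.mem_ofPred_eq, Set.mem_inter_iff, Nat.le_succ_iff_eq_or_le]
  constructor
  · intro h
    exact ⟨fun j hj => h j (Or.inr hj), h _ (Or.inl rfl)⟩
  · rintro ⟨h, hsucc⟩ j (rfl | hj)
    exacts [hsucc, h j hj]

theorem compl_staysBelow (T : ℕ) :
    (staysBelow V ε T)ᶜ = {ω | ∃ k ≤ T, ε ≤ V k ω} := by
  ext ω
  simp [staysBelow]

theorem measurableSet_staysBelow {ℱ : Filtration ℕ m} (hadapted : Adapted ℱ V) (k : ℕ) :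
    MeasurableSet[ℱ k] (staysBelow V ε k) := by
  induction k with
  | zero =>
    rw [staysBelow_zero]
    exact MeasurableSet.univ.inter (measurableSet_lt (hadapted 0) measurable_const)
  | succ k ih =>
    rw [staysBelow_succ]
    exact (ℱ.mono k.le_succ _ ih).inter (measurableSet_lt (hadapted _) measurable_const)

end StaysBelow

section Drift

variable {Ω : Type*} {m : MeasurableSpace Ω} {μ : Measure Ω} [IsFiniteMeasure μ]
  {ℱ : Filtration ℕ m} {V : ℕ → Ω → ℝ} {κ ψ ε : ℝ}

theorem mul_setIntegral_staysBelow_le_succ (hadapted : Adapted ℱ V)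
    (hint : ∀ k, Integrable (V k) μ) (hnonneg : ∀ k ω, 0 ≤ V k ω)
    (hdrift : ∀ k, μ[V (k + 1) | ℱ k] ≤ᵐ[μ] fun ω => V k ω - κ * V k ω + ψ)
    (hε : 0 < ε) (hψε : ψ / ε ≤ κ) (k : ℕ) :
    (1 - ψ / ε) * ∫ ω in staysBelow V ε k, (ε - V k ω) ∂μ ≤
      ∫ ω in staysBelow V ε (k + 1), (ε - V (k + 1) ω) ∂μ := by
  set A := staysBelow V ε k
  have hA : MeasurableSet[ℱ k] A := measurableSet_staysBelow hadapted k
  have hdrift_int : Integrable (fun ω => V k ω - κ * V k ω + ψ) μ :=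
    ((hint k).sub ((hint k).const_mul κ)).add (integrable_const ψ)
  have hcond : ∫ ω in A, V (k + 1) ω ∂μ ≤ ∫ ω in A, (V k ω - κ * V k ω + ψ) ∂μ :=
    setIntegral_le_of_condExp_le (ℱ.le k) (hint _) hdrift_int (hdrift k) hA
  calc (1 - ψ / ε) * ∫ ω in A, (ε - V k ω) ∂μ
      = ∫ ω in A, (1 - ψ / ε) * (ε - V k ω) ∂μ := (integral_const_mul _ _).symm
    _ ≤ ∫ ω in A, (ε - (V k ω - κ * V k ω + ψ)) ∂μ :=
        setIntegral_mono (((integrable_const ε).sub (hint k)).const_mul _).integrableOn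
          ((integrable_const ε).sub hdrift_int).integrableOn
          fun ω => one_sub_div_mul_sub_le hε hψε (hnonneg k ω)
    _ ≤ ∫ ω in A, (ε - V (k + 1) ω) ∂μ := by
        rw [integral_sub (integrable_const ε).integrableOn hdrift_int.integrableOn,
          integral_sub (integrable_const ε).integrableOn (hint _).integrableOn]
        linarith
    _ ≤ ∫ ω in A ∩ {ω | V (k + 1) ω < ε}, (ε - V (k + 1) ω) ∂μ :=
        setIntegral_le_setIntegral_inter (ℱ.le k _ hA)
          (measurableSet_lt ((hadapted _).mono (ℱ.le _) le_rfl) measurable_const)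
          ((integrable_const ε).sub (hint _)).integrableOn
          fun ω hω => sub_nonpos.2 (not_lt.1 hω.2)
    _ = ∫ ω in staysBelow V ε (k + 1), (ε - V (k + 1) ω) ∂μ := by rw [staysBelow_succ]

theorem sub_mul_pow_le_setIntegral_staysBelow [IsProbabilityMeasure μ] (hadapted : Adapted ℱ V)
    (hint : ∀ k, Integrable (V k) μ) (hnonneg : ∀ k ω, 0 ≤ V k ω)
    (hdrift : ∀ k, μ[V (k + 1) | ℱ k] ≤ᵐ[μ] fun ω => V k ω - κ * V k ω + ψ)
    {v₀ : ℝ} (hV₀ : V 0 = fun _ => v₀) (hε : 0 < ε) (hψε : ψ / ε ≤ κ) (hc : 0 ≤ 1 - ψ / ε)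
    (k : ℕ) : (ε - v₀) * (1 - ψ / ε) ^ k ≤ ∫ ω in staysBelow V ε k, (ε - V k ω) ∂μ := by
  induction k with
  | zero =>
    calc (ε - v₀) * (1 - ψ / ε) ^ 0 = ∫ ω in Set.univ, (ε - V 0 ω) ∂μ := by simp [hV₀]
      _ ≤ ∫ ω in Set.univ ∩ {ω | V 0 ω < ε}, (ε - V 0 ω) ∂μ :=
          setIntegral_le_setIntegral_inter MeasurableSet.univ
            (measurableSet_lt ((hadapted 0).mono (ℱ.le 0) le_rfl) measurable_const)
            ((integrable_const ε).sub (hint 0)).integrableOn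
            fun ω hω => sub_nonpos.2 (not_lt.1 hω.2)
      _ = ∫ ω in staysBelow V ε 0, (ε - V 0 ω) ∂μ := by rw [staysBelow_zero]
  | succ k ih =>
    calc (ε - v₀) * (1 - ψ / ε) ^ (k + 1) = (1 - ψ / ε) * ((ε - v₀) * (1 - ψ / ε) ^ k) := by
          ring
      _ ≤ (1 - ψ / ε) * ∫ ω in staysBelow V ε k, (ε - V k ω) ∂μ := by gcongr
      _ ≤ _ := mul_setIntegral_staysBelow_le_succ hadapted hint hnonneg hdrift hε hψε k

theorem setIntegral_staysBelow_le (hint : ∀ k, Integrable (V k) μ)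
    (hnonneg : ∀ k ω, 0 ≤ V k ω) (k : ℕ) :
    ∫ ω in staysBelow V ε k, (ε - V k ω) ∂μ ≤ ε * μ.real (staysBelow V ε k) := by
  calc ∫ ω in staysBelow V ε k, (ε - V k ω) ∂μ ≤ ∫ _ in staysBelow V ε k, ε ∂μ :=
        setIntegral_mono ((integrable_const ε).sub (hint k)).integrableOn
          (integrable_const ε).integrableOn fun ω => sub_le_self ε (hnonneg k ω)
    _ = ε * μ.real (staysBelow V ε k) := by rw [setIntegral_const, smul_eq_mul, mul_comm]

end Drift

theorem kushner_bound_case1_general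
    {Ω : Type*} {m : MeasurableSpace Ω} {μ : Measure Ω} [IsProbabilityMeasure μ]
    (ℱ : Filtration ℕ m) (V : ℕ → Ω → ℝ)
    (hadapted : Adapted ℱ V) (hint : ∀ k, Integrable (V k) μ)
    (hnonneg : ∀ k ω, 0 ≤ V k ω)
    (κ ψ : ℝ) (hκ0 : 0 < κ) (hκ1 : κ < 1)
    (hdrift : ∀ k, μ[V (k + 1) | ℱ k] ≤ᵐ[μ] fun ω => V k ω - κ * V k ω + ψ)
    (v0 : ℝ) (hV0 : V 0 = fun _ => v0)
    (ε : ℝ) (hε : 0 < ε) (hεκ : ψ / κ ≤ ε) (T : ℕ) :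
    (μ {ω | ∃ k ≤ T, ε ≤ V k ω}).toReal ≤
      1 - (1 - v0 / ε) * (1 - ψ / ε) ^ T := by
  have hψε : ψ / ε ≤ κ := by
    rw [div_le_iff₀ hε, mul_comm]
    rwa [div_le_iff₀ hκ0] at hεκ
  have hc : 0 ≤ 1 - ψ / ε := by linarith
  have hbound : (ε - v0) * (1 - ψ / ε) ^ T ≤ ε * μ.real (staysBelow V ε T) :=
    (sub_mul_pow_le_setIntegral_staysBelow hadapted hint hnonneg hdrift hV0 hε hψε hc T).trans
      (setIntegral_staysBelow_le hint hnonneg T)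
  have hrescale : (1 - v0 / ε) * (1 - ψ / ε) ^ T = (ε - v0) * (1 - ψ / ε) ^ T / ε := by
    field_simp
  rw [← compl_staysBelow, ← measureReal_def,
    probReal_compl_eq_one_sub (ℱ.le T _ (measurableSet_staysBelow hadapted T)), hrescale]
  have := (div_le_iff₀' hε).2 hbound
  linarith

theorem kushner_bound_case1
    {Ω : Type*} {m : MeasurableSpace Ω} {μ : Measure Ω} [IsProbabilityMeasure μ]
    (ℱ : Filtration ℕ m) (V : ℕ → Ω → ℝ)
    (hadapted : Adapted ℱ V) (hint : ∀ k, Integrable (V k) μ)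
    (hnonneg : ∀ k ω, 0 ≤ V k ω)
    (κ ψ : ℝ) (hκ0 : 0 < κ) (hκ1 : κ < 1) (hψ : 0 ≤ ψ)
    (hdrift : ∀ k, μ[V (k + 1) | ℱ k] ≤ᵐ[μ] fun ω => V k ω - κ * V k ω + ψ)
    (v0 : ℝ) (hV0 : V 0 = fun _ => v0)
    (ε : ℝ) (hε : 0 < ε) (hεκ : ψ / κ ≤ ε) (hv0ε : v0 ≤ ε) (T : ℕ) :
    (μ {ω | ∃ k ≤ T, ε ≤ V k ω}).toReal ≤
      1 - (1 - v0 / ε) * (1 - ψ / ε) ^ T :=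
  kushner_bound_case1_general ℱ V hadapted hint hnonneg κ ψ hκ0 hκ1 hdrift v0 hV0 ε hε hεκ T
end

section
/- Let (V_k)_{k≥0} be a nonnegative stochastic process adapted to a filtration such that E[V_{k+1} | F_k] - V_k ≤ -κ̂ V_k + ψ̂ almost surely for all k, with 0 < κ̂ < 1 and ψ̂ ≥ 0. Then for any ε > 0 with ε < ψ̂/κ̂ and any T ∈ ℕ, P( max_{0 ≤ k ≤ T} V_k ≥ ε ) ≤ (V_0/ε)(1-κ̂)^T + (ψ̂/(κ̂ ε))(1 - (1-κ̂)^T). -/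
/-!
Let `f v = v - κ v + ψ` be the mean drift. Since `f` is affine and increasing, the drift condition
makes `Y k = f^[T - k] (V k)` a nonnegative supermartingale on `0 ≤ k ≤ T`. The iterate `f^[j] v` is a
convex combination of `v` and the fixed point `ψ / κ > ε`, so `V k ≥ ε` forces `Y k ≥ ε`. Ville's
maximal inequality then bounds the probability by `Y 0 / ε = f^[T] v₀ / ε`, which is the claimed
expression.
-/

open MeasureTheory Filter

/-- Ville's maximal inequality, proved by optional stopping at the first time `Y` reaches `c`. -/
theorem MeasureTheory.Supermartingale.mul_measureReal_exists_le_le_integral {Ω : Type*}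
    {m : MeasurableSpace Ω} {μ : Measure Ω} [IsFiniteMeasure μ] {𝒢 : Filtration ℕ m}
    {Y : ℕ → Ω → ℝ} (hY : Supermartingale Y 𝒢 μ) (hnonneg : 0 ≤ Y) (c : ℝ) (n : ℕ) :
    c * μ.real {ω | ∃ k ≤ n, c ≤ Y k ω} ≤ ∫ ω, Y 0 ω ∂μ := by
  set A := {ω | ∃ k ≤ n, c ≤ Y k ω}
  set τ : Ω → ℕ := hittingBtwn Y (Set.Ici c) 0 n
  have hτ : IsStoppingTime 𝒢 (fun ω ↦ (τ ω : ℕ)) :=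
    hY.stronglyAdapted.adapted.isStoppingTime_hittingBtwn measurableSet_Ici
  have hτn (ω : Ω) : ((τ ω : ℕ) : WithTop ℕ) ≤ n := mod_cast hittingBtwn_le ω
  have hA : MeasurableSet A := by
    have hYm (k : ℕ) : Measurable (Y k) := (hY.stronglyMeasurable k).measurable.le (𝒢.le k)
    simp only [A, Set.ofPred_exists]
    exact MeasurableSet.iUnion fun k ↦
      (MeasurableSet.const (k ≤ n)).inter (measurableSet_le measurable_const (hYm k))
  have hbound : A.indicator (fun _ ↦ c) ≤ stoppedValue Y (fun ω ↦ (τ ω : ℕ)) := by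
    intro ω
    by_cases hω : ω ∈ A
    · rw [Set.indicator_of_mem hω]
      obtain ⟨k, hk, hck⟩ := hω
      exact stoppedValue_hittingBtwn_mem (s := Set.Ici c) ⟨k, ⟨Nat.zero_le _, hk⟩, hck⟩
    · rw [Set.indicator_of_notMem hω]
      exact hnonneg _ _
  have hstop : ∫ ω, stoppedValue Y (fun ω ↦ (τ ω : ℕ)) ω ∂μ ≤ ∫ ω, Y 0 ω ∂μ := by
    have := hY.neg.expected_stoppedValue_mono (isStoppingTime_const 𝒢 0) hτ
      (fun _ ↦ WithTop.coe_le_coe.2 (Nat.zero_le _)) hτn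
    simpa [stoppedValue, integral_neg] using this
  calc c * μ.real A = ∫ ω, A.indicator (fun _ ↦ c) ω ∂μ := by
        rw [integral_indicator_const _ hA, smul_eq_mul, mul_comm]
    _ ≤ ∫ ω, stoppedValue Y (fun ω ↦ (τ ω : ℕ)) ω ∂μ :=
        integral_mono ((integrable_const c).indicator hA)
          (integrable_stoppedValue ℕ hτ hY.integrable hτn) hbound
    _ ≤ ∫ ω, Y 0 ω ∂μ := hstop

theorem condExp_const_mul_add_const {Ω : Type*} {m m₀ : MeasurableSpace Ω} {μ : Measure Ω}
    [IsFiniteMeasure μ] (hm : m ≤ m₀) (a b : ℝ) {X : Ω → ℝ} (hX : Integrable X μ) :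
    μ[fun ω ↦ a * X ω + b | m] =ᵐ[μ] fun ω ↦ a * μ[X | m] ω + b := by
  filter_upwards [condExp_add (m := m) (hX.const_mul a) (integrable_const b),
    condExp_smul (m := m) (μ := μ) a X] with ω hsum hsmul
  simp only [Pi.add_apply, condExp_const hm] at hsum
  exact hsum.trans (congrArg (· + b) hsmul)

/-- The `d`-th iterate of the mean drift `v ↦ v - κ * v + ψ`, in closed form. -/
noncomputable def driftIter (κ ψ : ℝ) (d : ℕ) (v : ℝ) : ℝ :=
  (1 - κ) ^ d * v + ψ / κ * (1 - (1 - κ) ^ d)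

section driftIter

variable {κ ψ : ℝ}

@[simp]
theorem driftIter_zero (v : ℝ) : driftIter κ ψ 0 v = v := by simp [driftIter]

theorem driftIter_succ (hκ : κ ≠ 0) (d : ℕ) (v : ℝ) :
    driftIter κ ψ (d + 1) v = driftIter κ ψ d (v - κ * v + ψ) := by
  simp only [driftIter]
  field_simp
  ring

theorem driftIter_mono (hκ : κ ≤ 1) (d : ℕ) : Monotone (driftIter κ ψ d) := fun _ _ h ↦
  add_le_add_left (mul_le_mul_of_nonneg_left h (pow_nonneg (by linarith) d)) _

theorem le_driftIter (hκ0 : 0 ≤ κ) (hκ1 : κ ≤ 1) (d : ℕ) {c v : ℝ} (hv : c ≤ v)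
    (hc : c ≤ ψ / κ) : c ≤ driftIter κ ψ d v := by
  have h0 : 0 ≤ (1 - κ) ^ d := pow_nonneg (by linarith) d
  have h1 : (1 - κ) ^ d ≤ 1 := pow_le_one₀ (by linarith) (by linarith)
  unfold driftIter
  nlinarith [mul_le_mul_of_nonneg_left hv h0, mul_le_mul_of_nonneg_left hc (sub_nonneg.2 h1)]

theorem driftIter_nonneg (hκ0 : 0 ≤ κ) (hκ1 : κ ≤ 1) (hψ : 0 ≤ ψ) (d : ℕ) {v : ℝ}
    (hv : 0 ≤ v) : 0 ≤ driftIter κ ψ d v :=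
  le_driftIter hκ0 hκ1 d hv (div_nonneg hψ hκ0)

end driftIter

section forecastProcess

variable {Ω : Type*} {m : MeasurableSpace Ω} {μ : Measure Ω} {ℱ : Filtration ℕ m}
  {V : ℕ → Ω → ℝ} {κ ψ : ℝ}

/-- The prediction of `V T` made at time `k` by running the mean drift from `V k`;
constant from time `T` on. -/
noncomputable def forecastProcess (κ ψ : ℝ) (V : ℕ → Ω → ℝ) (T : ℕ) : ℕ → Ω → ℝ :=
  fun k ω ↦ driftIter κ ψ (T - k) (V (min k T) ω)

theorem forecastProcess_nonneg (hκ0 : 0 ≤ κ) (hκ1 : κ ≤ 1) (hψ : 0 ≤ ψ) (hV : 0 ≤ V) (T : ℕ) :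
    0 ≤ forecastProcess κ ψ V T := fun _ ω ↦
  driftIter_nonneg hκ0 hκ1 hψ _ (hV _ ω)

theorem supermartingale_forecastProcess [IsFiniteMeasure μ] (hadapted : Adapted ℱ V)
    (hint : ∀ k, Integrable (V k) μ) (hκ0 : κ ≠ 0) (hκ1 : κ ≤ 1)
    (hdrift : ∀ k, μ[V (k + 1) | ℱ k] ≤ᵐ[μ] fun ω ↦ V k ω - κ * V k ω + ψ) (T : ℕ) :
    Supermartingale (forecastProcess κ ψ V T) ℱ μ := by
  have hadp : StronglyAdapted ℱ (forecastProcess κ ψ V T) := fun k ↦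
    (((hadapted (min k T)).mono (ℱ.mono (min_le_left k T)) le_rfl).const_mul _
      |>.add_const _).stronglyMeasurable
  have hint' (k : ℕ) : Integrable (forecastProcess κ ψ V T k) μ :=
    ((hint _).const_mul _).add (integrable_const _)
  refine supermartingale_nat hadp hint' fun k ↦ ?_
  rcases lt_or_ge k T with hk | hk
  · obtain ⟨d, hd⟩ : ∃ d, T - k = d + 1 := ⟨T - (k + 1), by omega⟩
    have hnext : forecastProcess κ ψ V T (k + 1) = fun ω ↦ driftIter κ ψ d (V (k + 1) ω) := by
      unfold forecastProcess
      simp only [min_eq_left (Nat.succ_le_of_lt hk), show T - (k + 1) = d by omega]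
    rw [hnext]
    filter_upwards [condExp_const_mul_add_const (ℱ.le k) _ _ (hint (k + 1)), hdrift k]
      with ω hlin hω
    calc μ[fun ω ↦ driftIter κ ψ d (V (k + 1) ω) | ℱ k] ω
        = driftIter κ ψ d (μ[V (k + 1) | ℱ k] ω) := hlin
      _ ≤ driftIter κ ψ d (V k ω - κ * V k ω + ψ) := driftIter_mono hκ1 d hω
      _ = forecastProcess κ ψ V T k ω := by
        rw [forecastProcess, hd, min_eq_left hk.le, driftIter_succ hκ0]
  · have hfrozen : forecastProcess κ ψ V T (k + 1) = forecastProcess κ ψ V T k := by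
      unfold forecastProcess
      simp only [min_eq_right hk, min_eq_right (hk.trans (Nat.le_succ k)),
        Nat.sub_eq_zero_of_le hk, Nat.sub_eq_zero_of_le (hk.trans (Nat.le_succ k))]
    rw [hfrozen, condExp_of_stronglyMeasurable (ℱ.le k) (hadp k) (hint' k)]

end forecastProcess

theorem kushner_bound_case2
    {Ω : Type*} {m : MeasurableSpace Ω} {μ : Measure Ω} [IsProbabilityMeasure μ]
    (ℱ : Filtration ℕ m) (V : ℕ → Ω → ℝ)
    (hadapted : Adapted ℱ V) (hint : ∀ k, Integrable (V k) μ)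
    (hnonneg : ∀ k ω, 0 ≤ V k ω)
    (κ ψ : ℝ) (hκ0 : 0 < κ) (hκ1 : κ < 1) (hψ : 0 ≤ ψ)
    (hdrift : ∀ k, μ[V (k + 1) | ℱ k] ≤ᵐ[μ] fun ω => V k ω - κ * V k ω + ψ)
    (v0 : ℝ) (hV0 : V 0 = fun _ => v0)
    (ε : ℝ) (hε : 0 < ε) (hεκ : ε < ψ / κ) (T : ℕ) :
    (μ {ω | ∃ k ≤ T, ε ≤ V k ω}).toReal ≤
      (v0 / ε) * (1 - κ) ^ T + (ψ / (κ * ε)) * (1 - (1 - κ) ^ T) := by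
  set Y := forecastProcess κ ψ V T
  have hville := (supermartingale_forecastProcess hadapted hint hκ0.ne' hκ1.le hdrift T
    ).mul_measureReal_exists_le_le_integral
    (forecastProcess_nonneg hκ0.le hκ1.le hψ hnonneg T) ε T
  have hsub : {ω | ∃ k ≤ T, ε ≤ V k ω} ⊆ {ω | ∃ k ≤ T, ε ≤ Y k ω} := by
    rintro ω ⟨k, hk, hkω⟩
    refine ⟨k, hk, ?_⟩
    simp only [Y, forecastProcess, min_eq_left hk]
    exact le_driftIter hκ0.le hκ1.le _ hkω hεκ.le
  have hY0 : ∫ ω, Y 0 ω ∂μ = driftIter κ ψ T v0 := by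
    simp [Y, forecastProcess, hV0]
  calc (μ {ω | ∃ k ≤ T, ε ≤ V k ω}).toReal
      ≤ μ.real {ω | ∃ k ≤ T, ε ≤ Y k ω} := measureReal_mono hsub
    _ ≤ driftIter κ ψ T v0 / ε := by
        rw [le_div_iff₀ hε, mul_comm, ← hY0]
        exact hville
    _ = (v0 / ε) * (1 - κ) ^ T + (ψ / (κ * ε)) * (1 - (1 - κ) ^ T) := by
        rw [driftIter]
        field_simp
end

section
/- Let Λ = diag(λ₁,…,λ_N) with all λ_i > 0, and let Δ be a nonnegative N×N matrix with zero diagonal. If the spectral radius of Λ⁻¹Δ is strictly less than 1, then there exists a vector μ ∈ ℝ^N with all entries strictly positive such that μᵀ(-Λ + Δ) < 0 componentwise (i.e., every entry of the row vector μᵀ(-Λ+Δ) is negative). -/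
/-!
The powers of `A = Λ⁻¹Δ` are summable: by Gelfand's formula `‖Aⁿ‖ ≤ rⁿ` eventually for any `r`
strictly between the spectral radius and `1`. The Neumann series `S = ∑ Aⁿ` is then the inverse of
`1 - A`, and it is entrywise nonnegative with diagonal entries at least `1`. Hence the column sums
`ν = 𝟙ᵀ S` are positive and satisfy `νᵀ(1 - A) = 𝟙ᵀ`, so `μ = Λ⁻¹ν` gives `μᵀ(-Λ + Δ) = -𝟙ᵀ`.
-/

open Matrix Filter

section BanachAlgebra

variable {A : Type*} [NormedRing A] [NormedAlgebra ℂ A] [CompleteSpace A]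

theorem spectrum.spectralRadius_lt_one_of_forall_norm_lt_one {a : A}
    (h : ∀ z ∈ spectrum ℂ a, ‖z‖ < 1) : spectralRadius ℂ a < 1 := by
  rcases (spectrum ℂ a).eq_empty_or_nonempty with hσ | hσ
  · simp [spectralRadius, hσ]
  · exact_mod_cast spectrum.spectralRadius_lt_of_forall_lt_of_nonempty hσ (r := 1)
      fun z hz => by exact_mod_cast h z hz

theorem summable_pow_of_spectralRadius_lt_one {a : A} (h : spectralRadius ℂ a < 1) :
    Summable (a ^ ·) := by
  obtain ⟨r, hρr, hr1⟩ := ENNReal.lt_iff_exists_nnreal_btwn.mp h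
  have hroot : ∀ᶠ n : ℕ in atTop, (‖a ^ n‖₊ : ENNReal) ^ (1 / n : ℝ) < r :=
    (spectrum.pow_nnnorm_pow_one_div_tendsto_nhds_spectralRadius a).eventually_lt_const hρr
  refine .of_norm_bounded_eventually_nat
    (summable_geometric_of_lt_one r.coe_nonneg (by exact_mod_cast hr1)) ?_
  filter_upwards [hroot, eventually_gt_atTop 0] with n hn hn0
  rw [one_div, ENNReal.rpow_inv_lt_iff (by positivity), ENNReal.rpow_natCast] at hn
  exact_mod_cast hn.le

end BanachAlgebra

namespace Matrix

variable {n : Type*} [Fintype n] [DecidableEq n]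

attribute [local instance] Matrix.linftyOpNormedRing Matrix.linftyOpNormedAlgebra in
theorem summable_pow_of_forall_norm_lt_one {M : Matrix n n ℝ}
    (h : ∀ z ∈ spectrum ℂ (M.map (Complex.ofReal ·)), ‖z‖ < 1) : Summable (M ^ ·) := by
  have hsum : Summable ((M.map (Complex.ofReal ·)) ^ ·) :=
    summable_pow_of_spectralRadius_lt_one (spectrum.spectralRadius_lt_one_of_forall_norm_lt_one h)
  convert hsum.map Complex.reAddGroupHom.mapMatrix
    (continuous_id.matrix_map Complex.continuous_re) using 2 with k
  have hpow : (M.map (Complex.ofReal ·)) ^ k = (M ^ k).map (Complex.ofReal ·) :=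
    (map_pow Complex.ofRealHom.mapMatrix M k).symm
  ext i j
  simp [hpow]

theorem exists_pos_vecMul_one_sub_eq_one {M : Matrix n n ℝ} (hM : ∀ i j, 0 ≤ M i j)
    (hs : Summable (M ^ ·)) : ∃ ν : n → ℝ, (∀ j, 0 < ν j) ∧ ν ᵥ* (1 - M) = 1 := by
  set S := ∑' k, M ^ k
  have hS_apply : ∀ i j, S i j = ∑' k, (M ^ k) i j := fun i j =>
    (congrFun (tsum_apply hs) j).trans (tsum_apply (Pi.summable.mp hs i))
  have hS_nonneg : ∀ i j, 0 ≤ S i j := fun i j => by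
    rw [hS_apply]
    exact tsum_nonneg fun k => pow_apply_nonneg hM k i j
  have hS_diag : ∀ j, 1 ≤ S j j := fun j => by
    rw [hS_apply]
    simpa using (Pi.summable.mp (Pi.summable.mp hs j) j).le_tsum 0
      fun k _ => pow_apply_nonneg hM k j j
  refine ⟨1 ᵥ* S, fun j => ?_, ?_⟩
  · calc 0 < S j j := one_pos.trans_le (hS_diag j)
      _ ≤ ∑ i, S i j := Finset.single_le_sum (fun i _ => hS_nonneg i j) (Finset.mem_univ j)
      _ = (1 ᵥ* S) j := by simp [vecMul, dotProduct]
  · rw [vecMul_vecMul, hs.tsum_pow_mul_one_sub, vecMul_one]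

end Matrix

theorem smallgain_positive_left_vector_general
    {N : ℕ}
    (lam : Fin N → ℝ) (hlam : ∀ i, 0 < lam i)
    (Δ : Matrix (Fin N) (Fin N) ℝ)
    (hΔnonneg : ∀ i j, 0 ≤ Δ i j)
    (hspec : ∀ z ∈ spectrum ℂ (((Matrix.diagonal lam)⁻¹ * Δ).map (Complex.ofReal ·)),
      ‖z‖ < 1) :
    ∃ μ : Fin N → ℝ, (∀ i, 0 < μ i) ∧
      ∀ j, (μ ᵥ* (-(Matrix.diagonal lam) + Δ)) j < 0 := by
  have hinv_mul : diagonal lam⁻¹ * diagonal lam = 1 := by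
    rw [diagonal_mul_diagonal, ← diagonal_one]
    exact congrArg diagonal (funext fun i => inv_mul_cancel₀ (hlam i).ne')
  rw [inv_eq_left_inv hinv_mul] at hspec
  have hA : ∀ i j, 0 ≤ (diagonal lam⁻¹ * Δ) i j := fun i j => by
    rw [diagonal_mul]
    exact mul_nonneg (inv_nonneg.mpr (hlam i).le) (hΔnonneg i j)
  obtain ⟨ν, hν_pos, hν⟩ :=
    exists_pos_vecMul_one_sub_eq_one hA (summable_pow_of_forall_norm_lt_one hspec)
  have hμ : ν ᵥ* diagonal lam⁻¹ ᵥ* (-diagonal lam + Δ) = -1 := by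
    rw [vecMul_vecMul, mul_add, mul_neg, hinv_mul, neg_add_eq_sub, ← neg_sub, vecMul_neg, hν]
  refine ⟨ν ᵥ* diagonal lam⁻¹, fun i => ?_, fun j => ?_⟩
  · rw [vecMul_diagonal]
    exact mul_pos (hν_pos i) (inv_pos.mpr (hlam i))
  · rw [hμ]
    exact neg_neg_iff_pos.mpr one_pos

theorem smallgain_positive_left_vector
    {N : ℕ} (hN : 0 < N)
    (lam : Fin N → ℝ) (hlam : ∀ i, 0 < lam i)
    (Δ : Matrix (Fin N) (Fin N) ℝ)
    (hΔnonneg : ∀ i j, 0 ≤ Δ i j) (hΔdiag : ∀ i, Δ i i = 0)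
    (hspec : ∀ z ∈ spectrum ℂ (((Matrix.diagonal lam)⁻¹ * Δ).map (Complex.ofReal ·)),
      ‖z‖ < 1) :
    ∃ μ : Fin N → ℝ, (∀ i, 0 < μ i) ∧
      ∀ j, (μ ᵥ* (-(Matrix.diagonal lam) + Δ)) j < 0 :=
  smallgain_positive_left_vector_general lam hlam Δ hΔnonneg hspec
end
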